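/- Weighted normal-derivative moments of φ_i = λ_i³λ_{i+1} − 3λ_i²λ_{i+1}² + λ_iλ_{i+1}³ used for FE_eq: define g_k(v) = ⨍_{e_k} λ_{k+1} ∂_n v and h_k(v) = ⨍_{e_k} λ_{k+1}² ∂_n v. Then for all i, k ∈ {1,2,3}: g_k(φ_i) = −(1/5)‖∇λ_k‖ if k ≡ i (mod 3), = −(1/20)‖∇λ_k‖ if k ≡ i+1 (mod 3), and = 0 if k ≡ i+2 (mod 3); and h_k(φ_i) = −(1/6)‖∇λ_k‖ if k ≡ i (mod 3), = −(1/60)‖∇λ_k‖ if k ≡ i+1 (mod 3), and = (1/60)‖∇λ_k‖ if k ≡ i+2 (mod 3). -/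

import Mathlib

open MeasureTheory
open scoped RealInnerProductSpace

noncomputable section

/-- Points of the plane `ℝ²`. -/
abbrev Pt := EuclideanSpace ℝ (Fin 2)

/-- `p : ℝ² → ℝ` is a real polynomial function of total degree at most `k`. -/
def IsPolyDeg (k : ℕ) (p : Pt → ℝ) : Prop :=
  ∃ q : MvPolynomial (Fin 2) ℝ, q.totalDegree ≤ k ∧
    ∀ x : Pt, p x = MvPolynomial.eval (fun j => x j) q

/-- Average of `f` over the edge `e_i` (the segment from `a (i+1)` to `a (i+2)`,
opposite the vertex `a i`) with respect to the 1-dimensional Hausdorff measure. -/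
def edgeAvg (a : Fin 3 → Pt) (i : Fin 3) (f : Pt → ℝ) : ℝ :=
  ⨍ x in segment ℝ (a (i+1)) (a (i+2)), f x ∂(μH[1])

/-- Average of `f` over the triangle `T` (the convex hull of the vertices)
with respect to the 2-dimensional Lebesgue measure. -/
def triAvg (a : Fin 3 → Pt) (f : Pt → ℝ) : ℝ :=
  ⨍ x in convexHull ℝ (Set.range a), f x

/-- The normal derivative `∂ₙ v = ∇v ⬝ n_i` on the edge `e_i`, where
`n_i = -∇λ_i / ‖∇λ_i‖` and `g i = ∇λ_i`. -/
def nderiv (g : Fin 3 → Pt) (i : Fin 3) (v : Pt → ℝ) (x : Pt) : ℝ :=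
  ⟪gradient v x, -(‖g i‖⁻¹ • g i)⟫

/-- The quartic functions `φ_i = λ_i³λ_{i+1} - 3λ_i²λ_{i+1}² + λ_iλ_{i+1}³`. -/
def phiQ (lam : Fin 3 → Pt → ℝ) (i : Fin 3) (x : Pt) : ℝ :=
  lam i x ^ 3 * lam (i+1) x - 3 * lam i x ^ 2 * lam (i+1) x ^ 2
    + lam i x * lam (i+1) x ^ 3

/-! ### Auxiliary lemmas -/

lemma integral_poly5 (c0 c1 c2 c3 c4 c5 : ℝ) :
    ∫ t in (0:ℝ)..1, (c0 + c1*t + c2*t^2 + c3*t^3 + c4*t^4 + c5*t^5)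
      = c0 + c1/2 + c2/3 + c3/4 + c4/5 + c5/6 := by
  have h : ∀ t ∈ Set.uIcc (0:ℝ) 1, HasDerivAt
      (fun u : ℝ => c0*u + c1*(u^2/2) + c2*(u^3/3) + c3*(u^4/4) + c4*(u^5/5) + c5*(u^6/6))
      (c0 + c1*t + c2*t^2 + c3*t^3 + c4*t^4 + c5*t^5) t := by
    intro t _
    have H := ((((((hasDerivAt_id t).const_mul c0).add
      (((hasDerivAt_pow 2 t).div_const 2).const_mul c1)).add
      (((hasDerivAt_pow 3 t).div_const 3).const_mul c2)).add
      (((hasDerivAt_pow 4 t).div_const 4).const_mul c3)).add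
      (((hasDerivAt_pow 5 t).div_const 5).const_mul c4)).add
      (((hasDerivAt_pow 6 t).div_const 6).const_mul c5)
    refine H.congr_deriv ?_
    push_cast
    ring
  rw [intervalIntegral.integral_eq_sub_of_hasDerivAt h
    (Continuous.intervalIntegrable (by continuity) _ _)]
  norm_num
  ring

lemma avg_segment (p q : Pt) (hpq : p ≠ q) (f : Pt → ℝ) :
    (⨍ x in segment ℝ p q, f x ∂(μH[1])) = ∫ t in (0:ℝ)..1, f (p + t • (q - p)) := by
  set L := dist p q with hLdef
  have hL : 0 < L := dist_pos.2 hpq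
  have hnorm : ‖q - p‖ = L := by rw [hLdef, dist_eq_norm, norm_sub_rev]
  set F : ℝ → Pt := fun s => p + (s / L) • (q - p) with hF
  have hiso : Isometry F := by
    apply Isometry.of_dist_eq
    intro s1 s2
    rw [hF]
    simp only
    rw [dist_eq_norm, show (p + (s1 / L) • (q - p)) - (p + (s2 / L) • (q - p))
        = ((s1 - s2) / L) • (q - p) by rw [sub_div]; module]
    rw [norm_smul, hnorm, Real.norm_eq_abs, abs_div, abs_of_pos hL, Real.dist_eq]
    field_simp
  have hseg : segment ℝ p q = F '' Set.Icc 0 L := by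
    rw [segment_eq_image']
    ext z
    constructor
    · rintro ⟨θ, ⟨h0, h1⟩, rfl⟩
      exact ⟨θ * L, ⟨by positivity, by nlinarith⟩, by rw [hF]; simp [mul_div_assoc,
        div_self hL.ne']⟩
    · rintro ⟨s, ⟨h0, h1⟩, rfl⟩
      exact ⟨s / L, ⟨by positivity, by rw [div_le_one hL]; exact h1⟩, rfl⟩
  have hmeas : Measure.map F volume = (μH[1] : Measure Pt).restrict (Set.range F) := by
    rw [← MeasureTheory.hausdorffMeasure_real]
    exact hiso.map_hausdorffMeasure (Or.inl one_pos.le)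
  have hembed : MeasurableEmbedding F := hiso.isClosedEmbedding.measurableEmbedding
  have hmeasseg : MeasurableSet (segment ℝ p q) := by
    rw [hseg]
    exact ((isCompact_Icc.image hiso.continuous).isClosed).measurableSet
  have hsub : segment ℝ p q ⊆ Set.range F := by
    rw [hseg]; exact Set.image_subset_range _ _
  have key : ∫ x in segment ℝ p q, f x ∂(μH[1]) = L * ∫ t in (0:ℝ)..1, f (p + t • (q - p)) := by
    have e1 : ∫ x in segment ℝ p q, f x ∂(μH[1])
        = ∫ x in segment ℝ p q, f x ∂(Measure.map F volume) := by
      rw [hmeas, Measure.restrict_restrict hmeasseg, Set.inter_eq_self_of_subset_left hsub]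
    rw [e1, hembed.setIntegral_map]
    have e2 : F ⁻¹' segment ℝ p q = Set.Icc 0 L := by
      rw [hseg, Set.preimage_image_eq _ hiso.injective]
    rw [e2, MeasureTheory.integral_Icc_eq_integral_Ioc, ← intervalIntegral.integral_of_le hL.le]
    have e3 := intervalIntegral.integral_comp_div (a := (0:ℝ)) (b := L)
      (fun t => f (p + t • (q - p))) hL.ne'
    simp only [zero_div, div_self hL.ne'] at e3
    rw [hF]
    simp only
    rw [e3, smul_eq_mul]
  rw [setAverage_eq, key, measureReal_def, hausdorffMeasure_segment, edist_dist,
    ENNReal.toReal_ofReal hL.le, smul_eq_mul, ← mul_assoc, inv_mul_cancel₀ hL.ne', one_mul]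

lemma lam_on_edge (g : Fin 3 → Pt) (c : Fin 3 → ℝ) (lam : Fin 3 → Pt → ℝ)
    (hlam : ∀ j x, lam j x = ⟪g j, x⟫ + c j) (j : Fin 3) (p q : Pt) (t : ℝ) :
    lam j (p + t • (q - p)) = (1-t) * lam j p + t * lam j q := by
  rw [hlam, hlam, hlam, inner_add_right, real_inner_smul_right, inner_sub_right]
  ring

lemma nderiv_phiQ (g : Fin 3 → Pt) (c : Fin 3 → ℝ) (lam : Fin 3 → Pt → ℝ)
    (hlam : ∀ j x, lam j x = ⟪g j, x⟫ + c j) (i k : Fin 3) (x : Pt) :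
    nderiv g k (phiQ lam i) x =
      (3*(lam i x)^2*(lam (i+1) x) - 6*(lam i x)*(lam (i+1) x)^2 + (lam (i+1) x)^3)
        * ⟪g i, -(‖g k‖⁻¹ • g k)⟫
      + ((lam i x)^3 - 6*(lam i x)^2*(lam (i+1) x) + 3*(lam i x)*(lam (i+1) x)^2)
        * ⟪g (i+1), -(‖g k‖⁻¹ • g k)⟫ := by
  have hL : ∀ j : Fin 3, HasFDerivAt (lam j) (innerSL ℝ (g j) : Pt →L[ℝ] ℝ) x := by
    intro j
    have h1 : HasFDerivAt (fun y : Pt => ⟪g j, y⟫ + c j) (innerSL ℝ (g j) : Pt →L[ℝ] ℝ) x :=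
      ((innerSL ℝ (g j)).hasFDerivAt).add_const (c j)
    have h2 : (fun y : Pt => ⟪g j, y⟫ + c j) = lam j := by
      funext y; rw [hlam]
    rwa [h2] at h1
  have hl1 := hL i
  have hl2 := hL (i+1)
  have H := (((((hl1.mul hl1).mul hl1).mul hl2).sub
      ((((hl1.mul hl1).mul (hl2.mul hl2))).const_mul (3:ℝ))).add
      (hl1.mul ((hl2.mul hl2).mul hl2)))
  have hfun : phiQ lam i = fun y =>
      lam i y * lam i y * lam i y * lam (i+1) y
        - 3 * (lam i y * lam i y * (lam (i+1) y * lam (i+1) y))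
        + lam i y * (lam (i+1) y * lam (i+1) y * lam (i+1) y) := by
    funext y; rw [phiQ]; ring
  rw [nderiv]
  have hgrad : gradient (phiQ lam i) x = (InnerProductSpace.toDual ℝ Pt).symm
      ((lam i x * lam i x * lam i x) • (innerSL ℝ (g (i+1)) : Pt →L[ℝ] ℝ)
        + lam (i+1) x • ((lam i x * lam i x) • (innerSL ℝ (g i) : Pt →L[ℝ] ℝ)
          + lam i x • (lam i x • (innerSL ℝ (g i) : Pt →L[ℝ] ℝ)
            + lam i x • (innerSL ℝ (g i) : Pt →L[ℝ] ℝ)))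
        - (3:ℝ) • ((lam i x * lam i x) • (lam (i+1) x • (innerSL ℝ (g (i+1)) : Pt →L[ℝ] ℝ)
            + lam (i+1) x • (innerSL ℝ (g (i+1)) : Pt →L[ℝ] ℝ))
          + (lam (i+1) x * lam (i+1) x) • (lam i x • (innerSL ℝ (g i) : Pt →L[ℝ] ℝ)
            + lam i x • (innerSL ℝ (g i) : Pt →L[ℝ] ℝ)))
        + (lam i x • ((lam (i+1) x * lam (i+1) x) • (innerSL ℝ (g (i+1)) : Pt →L[ℝ] ℝ)
            + lam (i+1) x • (lam (i+1) x • (innerSL ℝ (g (i+1)) : Pt →L[ℝ] ℝ)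
              + lam (i+1) x • (innerSL ℝ (g (i+1)) : Pt →L[ℝ] ℝ)))
          + (lam (i+1) x * lam (i+1) x * lam (i+1) x) • (innerSL ℝ (g i) : Pt →L[ℝ] ℝ))) := by
    unfold gradient
    rw [hfun]; exact congrArg _ H.fderiv
  rw [hgrad, InnerProductSpace.toDual_symm_apply]
  simp only [ContinuousLinearMap.add_apply, ContinuousLinearMap.sub_apply,
    ContinuousLinearMap.smul_apply, innerSL_apply_apply, smul_eq_mul]
  ring

lemma gsum_zero (a : Fin 3 → Pt) (ha : AffineIndependent ℝ a)
    (g : Fin 3 → Pt) (c : Fin 3 → ℝ) (lam : Fin 3 → Pt → ℝ)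
    (hlam : ∀ i x, lam i x = ⟪g i, x⟫ + c i)
    (hdual : ∀ i j, lam i (a j) = if i = j then 1 else 0) :
    g 0 + g 1 + g 2 = 0 := by
  set G := g 0 + g 1 + g 2 with hGdef
  have hsum3 : ∀ m : Fin 3, lam 0 (a m) + lam 1 (a m) + lam 2 (a m) = 1 := by
    intro m
    have h : ∑ i : Fin 3, lam i (a m) = 1 := by
      simp [hdual]
    rwa [Fin.sum_univ_three] at h
  have hs : ∀ m : Fin 3, ⟪G, a m⟫ = 1 - (c 0 + c 1 + c 2) := by
    intro m
    have h := hsum3 m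
    rw [hlam 0, hlam 1, hlam 2] at h
    rw [hGdef, inner_add_left, inner_add_left]
    linarith
  have hinner : ∀ j : Fin 3, ⟪G, a j -ᵥ a 0⟫ = 0 := by
    intro j
    rw [vsub_eq_sub, inner_sub_right, hs j, hs 0, sub_self]
  have hli0 := (affineIndependent_iff_linearIndependent_vsub ℝ a 0).mp ha
  set e : Fin 2 → {x : Fin 3 // x ≠ 0} := ![⟨1, by decide⟩, ⟨2, by decide⟩] with he
  have hinj : Function.Injective e := by decide
  have hli : LinearIndependent ℝ (fun j : Fin 2 => a (e j).1 -ᵥ a 0) := hli0.comp e hinj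
  have hspan : Submodule.span ℝ (Set.range fun j : Fin 2 => a (e j).1 -ᵥ a 0) = ⊤ :=
    hli.span_eq_top_of_card_eq_finrank (by simp [finrank_euclideanSpace_fin])
  have hG : G ∈ Submodule.span ℝ (Set.range fun j : Fin 2 => a (e j).1 -ᵥ a 0) := by
    rw [hspan]; exact Submodule.mem_top
  obtain ⟨co, hco⟩ := Submodule.mem_span_range_iff_exists_fun ℝ |>.mp hG
  have hzero : ⟪G, G⟫ = (0:ℝ) := by
    nth_rewrite 2 [← hco]
    rw [Fin.sum_univ_two, inner_add_right, real_inner_smul_right, real_inner_smul_right]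
    have h1 : ((e 0 : {x : Fin 3 // x ≠ 0}) : Fin 3) = 1 := rfl
    have h2 : ((e 1 : {x : Fin 3 // x ≠ 0}) : Fin 3) = 2 := rfl
    rw [h1, h2, hinner 1, hinner 2]
    ring
  exact inner_self_eq_zero.mp hzero

lemma edge_momentA (a : Fin 3 → Pt) (g : Fin 3 → Pt) (c : Fin 3 → ℝ) (lam : Fin 3 → Pt → ℝ)
    (hlam : ∀ j x, lam j x = ⟪g j, x⟫ + c j) (i k : Fin 3)
    (hne : a (k+1) ≠ a (k+2)) :
    edgeAvg a k (fun x => lam (k+1) x * nderiv g k (phiQ lam i) x) =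
      ∫ t in (0:ℝ)..1,
        (((1-t) * lam (k+1) (a (k+1)) + t * lam (k+1) (a (k+2))) *
          ((3*((1-t) * lam i (a (k+1)) + t * lam i (a (k+2)))^2
              *((1-t) * lam (i+1) (a (k+1)) + t * lam (i+1) (a (k+2)))
            - 6*((1-t) * lam i (a (k+1)) + t * lam i (a (k+2)))
              *((1-t) * lam (i+1) (a (k+1)) + t * lam (i+1) (a (k+2)))^2
            + ((1-t) * lam (i+1) (a (k+1)) + t * lam (i+1) (a (k+2)))^3)
              * ⟪g i, -(‖g k‖⁻¹ • g k)⟫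
          + (((1-t) * lam i (a (k+1)) + t * lam i (a (k+2)))^3
            - 6*((1-t) * lam i (a (k+1)) + t * lam i (a (k+2)))^2
              *((1-t) * lam (i+1) (a (k+1)) + t * lam (i+1) (a (k+2)))
            + 3*((1-t) * lam i (a (k+1)) + t * lam i (a (k+2)))
              *((1-t) * lam (i+1) (a (k+1)) + t * lam (i+1) (a (k+2)))^2)
              * ⟪g (i+1), -(‖g k‖⁻¹ • g k)⟫)) := by
  rw [edgeAvg, avg_segment _ _ hne]
  apply intervalIntegral.integral_congr
  intro t _
  simp only
  rw [nderiv_phiQ g c lam hlam i k, lam_on_edge g c lam hlam (k+1),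
    lam_on_edge g c lam hlam i, lam_on_edge g c lam hlam (i+1)]

lemma edge_momentB (a : Fin 3 → Pt) (g : Fin 3 → Pt) (c : Fin 3 → ℝ) (lam : Fin 3 → Pt → ℝ)
    (hlam : ∀ j x, lam j x = ⟪g j, x⟫ + c j) (i k : Fin 3)
    (hne : a (k+1) ≠ a (k+2)) :
    edgeAvg a k (fun x => lam (k+1) x ^ 2 * nderiv g k (phiQ lam i) x) =
      ∫ t in (0:ℝ)..1,
        (((1-t) * lam (k+1) (a (k+1)) + t * lam (k+1) (a (k+2)))^2 *
          ((3*((1-t) * lam i (a (k+1)) + t * lam i (a (k+2)))^2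
              *((1-t) * lam (i+1) (a (k+1)) + t * lam (i+1) (a (k+2)))
            - 6*((1-t) * lam i (a (k+1)) + t * lam i (a (k+2)))
              *((1-t) * lam (i+1) (a (k+1)) + t * lam (i+1) (a (k+2)))^2
            + ((1-t) * lam (i+1) (a (k+1)) + t * lam (i+1) (a (k+2)))^3)
              * ⟪g i, -(‖g k‖⁻¹ • g k)⟫
          + (((1-t) * lam i (a (k+1)) + t * lam i (a (k+2)))^3
            - 6*((1-t) * lam i (a (k+1)) + t * lam i (a (k+2)))^2
              *((1-t) * lam (i+1) (a (k+1)) + t * lam (i+1) (a (k+2)))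
            + 3*((1-t) * lam i (a (k+1)) + t * lam i (a (k+2)))
              *((1-t) * lam (i+1) (a (k+1)) + t * lam (i+1) (a (k+2)))^2)
              * ⟪g (i+1), -(‖g k‖⁻¹ • g k)⟫)) := by
  rw [edgeAvg, avg_segment _ _ hne]
  apply intervalIntegral.integral_congr
  intro t _
  simp only
  rw [nderiv_phiQ g c lam hlam i k, lam_on_edge g c lam hlam (k+1),
    lam_on_edge g c lam hlam i, lam_on_edge g c lam hlam (i+1)]

/-- Weighted normal-derivative moments of `φ_i` used for FE_eq, where
`g_k(v) = ⨍_{e_k} λ_{k+1} ∂ₙ v` and `h_k(v) = ⨍_{e_k} λ_{k+1}² ∂ₙ v`. -/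
theorem phiQ_weighted_moments
    (a : Fin 3 → Pt) (ha : AffineIndependent ℝ a)
    (g : Fin 3 → Pt) (c : Fin 3 → ℝ) (lam : Fin 3 → Pt → ℝ)
    (hlam : ∀ i x, lam i x = ⟪g i, x⟫ + c i)
    (hdual : ∀ i j, lam i (a j) = if i = j then 1 else 0) :
    ∀ i k : Fin 3,
      (k = i → edgeAvg a k (fun x => lam (k+1) x * nderiv g k (phiQ lam i) x) =
        -(1/5) * ‖g k‖) ∧
      (k = i + 1 → edgeAvg a k (fun x => lam (k+1) x * nderiv g k (phiQ lam i) x) =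
        -(1/20) * ‖g k‖) ∧
      (k = i + 2 → edgeAvg a k (fun x => lam (k+1) x * nderiv g k (phiQ lam i) x) = 0) ∧
      (k = i → edgeAvg a k (fun x => lam (k+1) x ^ 2 * nderiv g k (phiQ lam i) x) =
        -(1/6) * ‖g k‖) ∧
      (k = i + 1 → edgeAvg a k (fun x => lam (k+1) x ^ 2 * nderiv g k (phiQ lam i) x) =
        -(1/60) * ‖g k‖) ∧
      (k = i + 2 → edgeAvg a k (fun x => lam (k+1) x ^ 2 * nderiv g k (phiQ lam i) x) =
        (1/60) * ‖g k‖) := by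
  -- index arithmetic facts
  have d1 : ∀ j : Fin 3, j ≠ j + 1 := by decide
  have d2 : ∀ j : Fin 3, j ≠ j + 2 := by decide
  have d3 : ∀ j : Fin 3, j + 1 ≠ j + 2 := by decide
  have d4 : ∀ j : Fin 3, j + 1 ≠ j := by decide
  have d5 : ∀ j : Fin 3, j + 2 ≠ j := by decide
  have d6 : ∀ j : Fin 3, j + 2 ≠ j + 1 := by decide
  have i11 : ∀ j : Fin 3, j + 1 + 1 = j + 2 := by decide
  have i12 : ∀ j : Fin 3, j + 1 + 2 = j := by decide
  have i21 : ∀ j : Fin 3, j + 2 + 1 = j := by decide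
  have i22 : ∀ j : Fin 3, j + 2 + 2 = j + 1 := by decide
  -- dual values
  have dv1 : ∀ p : Fin 3, lam p (a p) = 1 := fun p => by rw [hdual, if_pos rfl]
  have dv : ∀ p q : Fin 3, p ≠ q → lam p (a q) = 0 := fun p q h => by rw [hdual, if_neg h]
  -- nondegenerate edges
  have hneK : ∀ k : Fin 3, a (k+1) ≠ a (k+2) := fun k h => (d3 k) (ha.injective h)
  -- g k is nonzero
  have hgk : ∀ k : Fin 3, g k ≠ 0 := by
    intro k hk0
    have e1 := hlam k (a k)
    have e2 := hlam k (a (k+1))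
    rw [dv1 k] at e1
    rw [dv k (k+1) (d1 k)] at e2
    rw [hk0] at e1 e2
    simp at e1 e2
    rw [← e1] at e2
    norm_num at e2
  -- the key inner product
  have hwk : ∀ k : Fin 3, ⟪g k, -(‖g k‖⁻¹ • g k)⟫ = -‖g k‖ := by
    intro k
    rw [inner_neg_right, real_inner_smul_right, real_inner_self_eq_norm_mul_norm]
    have : ‖g k‖ ≠ 0 := norm_ne_zero_iff.mpr (hgk k)
    field_simp
  -- sum of gradients is zero
  have hperm : ∀ j : Fin 3, g j + g (j+1) + g (j+2) = 0 := by
    have h := gsum_zero a ha g c lam hlam hdual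
    intro j
    fin_cases j
    · exact h
    · show g 1 + g 2 + g 0 = 0
      rw [show g 1 + g 2 + g 0 = g 0 + g 1 + g 2 by abel]; exact h
    · show g 2 + g 0 + g 1 = 0
      rw [show g 2 + g 0 + g 1 = g 0 + g 1 + g 2 by abel]; exact h
  have hsumw : ∀ i : Fin 3, ⟪g (i+1), -(‖g (i+2)‖⁻¹ • g (i+2))⟫
      = ‖g (i+2)‖ - ⟪g i, -(‖g (i+2)‖⁻¹ • g (i+2))⟫ := by
    intro i
    have hadd : g i + g (i+1) = -g (i+2) := by
      have h := hperm i
      rw [add_eq_zero_iff_eq_neg] at h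
      exact h
    have : ⟪g i, -(‖g (i+2)‖⁻¹ • g (i+2))⟫ + ⟪g (i+1), -(‖g (i+2)‖⁻¹ • g (i+2))⟫
        = ‖g (i+2)‖ := by
      rw [← inner_add_left, hadd, inner_neg_left, hwk (i+2)]
      ring
    linarith
  intro i k
  refine ⟨?_, ?_, ?_, ?_, ?_, ?_⟩
  · -- g-moment, k = i
    intro hk; rw [hk]
    rw [edge_momentA a g c lam hlam i i (hneK i)]
    rw [dv1 (i+1), dv (i+1) (i+2) (d3 i), dv i (i+1) (d1 i), dv i (i+2) (d2 i), hwk i]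
    refine Eq.trans (intervalIntegral.integral_congr (g := fun t =>
      (-1*‖g i‖) + (4*‖g i‖)*t + (-6*‖g i‖)*t^2 + (4*‖g i‖)*t^3 + (-1*‖g i‖)*t^4
        + (0:ℝ)*t^5) ?_) ?_
    · intro t _; simp only; ring
    · rw [integral_poly5]; ring
  · -- g-moment, k = i+1
    intro hk; rw [hk]
    rw [edge_momentA a g c lam hlam i (i+1) (hneK (i+1))]
    rw [i11 i, i12 i]
    rw [dv1 (i+2), dv (i+2) i (d5 i), dv i (i+2) (d2 i), dv1 i,
      dv (i+1) (i+2) (d3 i), dv (i+1) i (d4 i), hwk (i+1)]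
    refine Eq.trans (intervalIntegral.integral_congr (g := fun t =>
      (0:ℝ) + (0:ℝ)*t + (0:ℝ)*t^2 + (-1*‖g (i+1)‖)*t^3 + (1*‖g (i+1)‖)*t^4
        + (0:ℝ)*t^5) ?_) ?_
    · intro t _; simp only; ring
    · rw [integral_poly5]; ring
  · -- g-moment, k = i+2
    intro hk; rw [hk]
    rw [edge_momentA a g c lam hlam i (i+2) (hneK (i+2))]
    rw [i21 i, i22 i]
    rw [dv1 i, dv i (i+1) (d1 i), dv (i+1) i (d4 i), dv1 (i+1), hsumw i]
    refine Eq.trans (intervalIntegral.integral_congr (g := fun t =>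
      ((-1)*⟪g i, -(‖g (i+2)‖⁻¹ • g (i+2))⟫ + 1*‖g (i+2)‖)
      + (13*⟪g i, -(‖g (i+2)‖⁻¹ • g (i+2))⟫ + (-10)*‖g (i+2)‖)*t
      + ((-42)*⟪g i, -(‖g (i+2)‖⁻¹ • g (i+2))⟫ + 27*‖g (i+2)‖)*t^2
      + (50*⟪g i, -(‖g (i+2)‖⁻¹ • g (i+2))⟫ + (-28)*‖g (i+2)‖)*t^3
      + ((-20)*⟪g i, -(‖g (i+2)‖⁻¹ • g (i+2))⟫ + 10*‖g (i+2)‖)*t^4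
      + (0:ℝ)*t^5) ?_) ?_
    · intro t _; simp only; ring
    · rw [integral_poly5]; ring
  · -- h-moment, k = i
    intro hk; rw [hk]
    rw [edge_momentB a g c lam hlam i i (hneK i)]
    rw [dv1 (i+1), dv (i+1) (i+2) (d3 i), dv i (i+1) (d1 i), dv i (i+2) (d2 i), hwk i]
    refine Eq.trans (intervalIntegral.integral_congr (g := fun t =>
      (-1*‖g i‖) + (5*‖g i‖)*t + (-10*‖g i‖)*t^2 + (10*‖g i‖)*t^3 + (-5*‖g i‖)*t^4
        + (1*‖g i‖)*t^5) ?_) ?_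
    · intro t _; simp only; ring
    · rw [integral_poly5]; ring
  · -- h-moment, k = i+1
    intro hk; rw [hk]
    rw [edge_momentB a g c lam hlam i (i+1) (hneK (i+1))]
    rw [i11 i, i12 i]
    rw [dv1 (i+2), dv (i+2) i (d5 i), dv i (i+2) (d2 i), dv1 i,
      dv (i+1) (i+2) (d3 i), dv (i+1) i (d4 i), hwk (i+1)]
    refine Eq.trans (intervalIntegral.integral_congr (g := fun t =>
      (0:ℝ) + (0:ℝ)*t + (0:ℝ)*t^2 + (-1*‖g (i+1)‖)*t^3 + (2*‖g (i+1)‖)*t^4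
        + (-1*‖g (i+1)‖)*t^5) ?_) ?_
    · intro t _; simp only; ring
    · rw [integral_poly5]; ring
  · -- h-moment, k = i+2
    intro hk; rw [hk]
    rw [edge_momentB a g c lam hlam i (i+2) (hneK (i+2))]
    rw [i21 i, i22 i]
    rw [dv1 i, dv i (i+1) (d1 i), dv (i+1) i (d4 i), dv1 (i+1), hsumw i]
    refine Eq.trans (intervalIntegral.integral_congr (g := fun t =>
      ((-1)*⟪g i, -(‖g (i+2)‖⁻¹ • g (i+2))⟫ + 1*‖g (i+2)‖)
      + (14*⟪g i, -(‖g (i+2)‖⁻¹ • g (i+2))⟫ + (-11)*‖g (i+2)‖)*t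
      + ((-55)*⟪g i, -(‖g (i+2)‖⁻¹ • g (i+2))⟫ + 37*‖g (i+2)‖)*t^2
      + (92*⟪g i, -(‖g (i+2)‖⁻¹ • g (i+2))⟫ + (-55)*‖g (i+2)‖)*t^3
      + ((-70)*⟪g i, -(‖g (i+2)‖⁻¹ • g (i+2))⟫ + 38*‖g (i+2)‖)*t^4
      + (20*⟪g i, -(‖g (i+2)‖⁻¹ • g (i+2))⟫ + (-10)*‖g (i+2)‖)*t^5) ?_) ?_
    · intro t _; simp only; ring
    · rw [integral_poly5]; ring
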